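/- arXiv:1506.07487 — 2 statements merged into one kernel-verified Lean document; each statement's English description precedes it below -/
import Mathlib

section
/- (Corrected Proposition 8.5.) Let X = (a_1, ..., a_m) be a finite list of nonzero vectors spanning ℂ^n and let μ : {1,...,m} → ℂ. Work in the field K = ℂ(x_1,...,x_n) of rational functions, the fraction field of ℂ[x_1,...,x_n], and for a vector a ∈ ℂ^n write a also for the linear polynomial Σ_j a_j x_j ∈ K. For p ∈ ℂ^n let X_p := { i : ⟨a_i | p⟩ + μ_i = 0 }, let P(X,μ) := { p ∈ ℂ^n : {a_i : i ∈ X_p} spans ℂ^n }, and for p ∈ P(X,μ) let L(X_p) be the family of subsets ℓ ⊆ X_p such that {a_i : i ∈ ℓ} spans ℂ^n. Then there exist complex numbers c_ℓ, indexed by the pairs (p, ℓ) with p ∈ P(X,μ) and ℓ ∈ L(X_p), such that in K one has ∏_{i=1}^m 1/(a_i + μ_i) = Σ_{p ∈ P(X,μ)} Σ_{ℓ ∈ L(X_p)} c_ℓ · ∏_{i ∈ ℓ} 1/(a_i + μ_i). -/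
open MvPolynomial

/-- The linear polynomial `∑ j, a j * x j ∈ ℂ[x_1, …, x_n]` attached to a vector `a ∈ ℂ^n`. -/
noncomputable def linForm {n : ℕ} (a : Fin n → ℂ) : MvPolynomial (Fin n) ℂ :=
  ∑ j, C (a j) * X j

/-- The element `a i + μ i` of the rational function field `K = ℂ(x_1, …, x_n)`. -/
noncomputable def affForm {n m : ℕ} (a : Fin m → (Fin n → ℂ)) (μ : Fin m → ℂ) (i : Fin m) :
    FractionRing (MvPolynomial (Fin n) ℂ) :=
  algebraMap (MvPolynomial (Fin n) ℂ) (FractionRing (MvPolynomial (Fin n) ℂ))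
    (linForm (a i) + C (μ i))

/-- `X_p`: the set of indices `i` such that `⟨a i | p⟩ + μ i = 0`. -/
def Xp {n m : ℕ} (a : Fin m → (Fin n → ℂ)) (μ : Fin m → ℂ) (p : Fin n → ℂ) : Set (Fin m) :=
  {i | (∑ j, a i j * p j) + μ i = 0}

/-- `P(X, μ)`: the points of the arrangement, i.e. the points `p` such that the
vectors `{a i : i ∈ X_p}` span `ℂ^n`. -/
def armPoints {n m : ℕ} (a : Fin m → (Fin n → ℂ)) (μ : Fin m → ℂ) : Set (Fin n → ℂ) :=
  {p | Submodule.span ℂ (a '' Xp a μ p) = ⊤}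

/-!
Induction on spanning subsets `S`. If the hyperplanes `a i + μ i = 0`, `i ∈ S`, meet in a point
`p`, then `S` is itself a term of the right-hand side. Otherwise the affine system has no
solution, and the Fredholm alternative gives constants `c` with `∑ c i • a i = 0` and
`∑ c i * μ i = 1`, i.e. `∑ c i (a i + μ i) = 1` in `K`. Multiplying `∏ 1/(a i + μ i)` by this
relation removes one factor from each term, and every `i` with `c i ≠ 0` can be removed from `S`
without losing the spanning property. Finally, a spanning set of hyperplanes has at most one
common point, so the terms are indexed without repetition by pairs `(p, ℓ)`.
-/

open Function Matrix

theorem prod_inv_eq_sum_smul_prod_erase {ι R K : Type*} [DecidableEq ι] [Field K] [SMul R K]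
    [IsScalarTower R K K] {s : Finset ι} {f : ι → K} (c : ι → R) (hf : ∀ i ∈ s, f i ≠ 0)
    (h : ∑ i ∈ s, c i • f i = 1) :
    ∏ i ∈ s, (f i)⁻¹ = ∑ i ∈ s, c i • ∏ j ∈ s.erase i, (f j)⁻¹ :=
  calc ∏ i ∈ s, (f i)⁻¹ = (∑ i ∈ s, c i • f i) * ∏ j ∈ s, (f j)⁻¹ := by rw [h, one_mul]
    _ = ∑ i ∈ s, c i • (f i * ∏ j ∈ s, (f j)⁻¹) := by simp only [Finset.sum_mul, smul_mul_assoc]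
    _ = ∑ i ∈ s, c i • ∏ j ∈ s.erase i, (f j)⁻¹ := by
      refine Finset.sum_congr rfl fun i hi => ?_
      rw [← Finset.mul_prod_erase s _ hi, ← mul_assoc, mul_inv_cancel₀ (hf i hi), one_mul]

theorem span_image_erase_eq_of_sum_smul_eq_zero {ι K V : Type*} [DecidableEq ι] [DivisionRing K]
    [AddCommGroup V] [Module K V] {s : Finset ι} {v : ι → V} {c : ι → K}
    (h : ∑ j ∈ s, c j • v j = 0) {i : ι} (hi : i ∈ s) (hci : c i ≠ 0) :
    Submodule.span K (v '' ↑(s.erase i)) = Submodule.span K (v '' ↑s) := by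
  have hvi : v i = -(c i)⁻¹ • ∑ j ∈ s.erase i, c j • v j := by
    rw [← Finset.add_sum_erase s _ hi] at h
    rw [neg_smul, ← smul_neg, ← eq_neg_of_add_eq_zero_left h, inv_smul_smul₀ hci]
  have hmem : v i ∈ Submodule.span K (v '' ↑(s.erase i)) := by
    rw [hvi]
    exact Submodule.smul_mem _ _ (Submodule.sum_smul_mem _ _ fun j hj =>
      Submodule.subset_span (Set.mem_image_of_mem v hj))
  conv_rhs => rw [← Finset.insert_erase hi, Finset.coe_insert, Set.image_insert_eq,
    Submodule.span_insert_eq_span hmem]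

theorem exists_sum_smul_eq_zero_and_sum_mul_eq_one {ι n K : Type*} [Fintype n] [DecidableEq n]
    [Field K] (s : Finset ι) (a : ι → n → K) (μ : ι → K)
    (h : ∀ p, ∃ i ∈ s, a i ⬝ᵥ p + μ i ≠ 0) :
    ∃ c : ι → K, ∑ i ∈ s, c i • a i = 0 ∧ ∑ i ∈ s, c i * μ i = 1 := by
  have hmem : ((0 : n → K), (1 : K)) ∈ Submodule.span K ((fun i => (a i, μ i)) '' ↑s) := by
    -- a functional `(x, t) ↦ w ⬝ᵥ x + t * λ` separating `(0, 1)` from the span, with `λ ≠ 0`,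
    -- turns `λ⁻¹ • w` into a common solution
    by_contra hnot
    obtain ⟨f, hf1, hf⟩ := Submodule.exists_dual_map_eq_bot_of_notMem hnot inferInstance
    set w := (dotProductEquiv K n).symm (f ∘ₗ LinearMap.inl K _ _)
    have hf_apply (x : n → K) (t : K) : f (x, t) = w ⬝ᵥ x + t * f (0, 1) := by
      have hxt : (x, t) = (x, 0) + t • ((0 : n → K), (1 : K)) := by simp
      rw [hxt, map_add, map_smul, smul_eq_mul, ← dotProductEquiv_apply_apply,
        LinearEquiv.apply_symm_apply]
      rfl
    obtain ⟨i, hi, hne⟩ := h ((f (0, 1))⁻¹ • w)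
    have hfi : f (a i, μ i) = 0 := by
      have := Submodule.mem_map_of_mem (f := f)
        (Submodule.subset_span (Set.mem_image_of_mem (fun i => (a i, μ i)) hi))
      rwa [hf, Submodule.mem_bot] at this
    apply hne
    rw [hf_apply] at hfi
    rw [dotProduct_smul, dotProduct_comm, smul_eq_mul]
    field_simp
    linear_combination hfi
  obtain ⟨c, hc⟩ := (Submodule.mem_span_image_finset_iff_exists_fun' K).mp hmem
  refine ⟨c, ?_, ?_⟩
  · simpa [Prod.fst_sum] using congr_arg Prod.fst hc
  · simpa [Prod.snd_sum] using congr_arg Prod.snd hc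

variable {n m : ℕ}

theorem coeff_single_linForm_add_C (v : Fin n → ℂ) (t : ℂ) (j : Fin n) :
    coeff (Finsupp.single j 1) (linForm v + C t) = v j := by
  have h0 : (0 : Fin n →₀ ℕ) ≠ Finsupp.single j 1 := (Finsupp.single_ne_zero.mpr one_ne_zero).symm
  simp [linForm, coeff_sum, coeff_X, coeff_C, Finsupp.single_left_inj, h0]

theorem linForm_add_C_ne_zero {v : Fin n → ℂ} (hv : v ≠ 0) (t : ℂ) : linForm v + C t ≠ 0 := by
  obtain ⟨j, hj⟩ := Function.ne_iff.mp hv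
  intro h
  exact hj (by simpa [h] using (coeff_single_linForm_add_C v t j).symm)

theorem affForm_ne_zero {a : Fin m → Fin n → ℂ} (μ : Fin m → ℂ) {i : Fin m} (hi : a i ≠ 0) :
    affForm a μ i ≠ 0 :=
  (map_ne_zero_iff _ (IsFractionRing.injective _ _)).mpr (linForm_add_C_ne_zero hi _)

theorem linForm_sum_smul {ι : Type*} (s : Finset ι) (c : ι → ℂ) (v : ι → Fin n → ℂ) :
    linForm (∑ i ∈ s, c i • v i) = ∑ i ∈ s, c i • linForm (v i) := by
  simp only [linForm, Finset.sum_apply, Pi.smul_apply, smul_eq_mul, map_sum, map_mul,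
    Finset.sum_mul, Finset.smul_sum, smul_eq_C_mul, mul_assoc]
  exact Finset.sum_comm

theorem sum_smul_affForm_eq_one {a : Fin m → Fin n → ℂ} {μ : Fin m → ℂ} {s : Finset (Fin m)}
    {c : Fin m → ℂ} (ha : ∑ i ∈ s, c i • a i = 0) (hμ : ∑ i ∈ s, c i * μ i = 1) :
    ∑ i ∈ s, c i • affForm a μ i = 1 := by
  have h : ∑ i ∈ s, c i • (linForm (a i) + C (μ i)) = 1 := by
    rw [Finset.sum_congr rfl fun i _ => smul_add (c i) _ _, Finset.sum_add_distrib,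
      ← linForm_sum_smul, ha, ← C_1, ← hμ, map_sum]
    simp [linForm, smul_eq_C_mul, C_mul]
  rw [← map_one (algebraMap (MvPolynomial (Fin n) ℂ) (FractionRing (MvPolynomial (Fin n) ℂ))), ← h,
    map_sum]
  simp [affForm, Algebra.smul_def, IsScalarTower.algebraMap_apply ℂ (MvPolynomial (Fin n) ℂ)]

theorem mem_Xp_iff {a : Fin m → Fin n → ℂ} {μ : Fin m → ℂ} {p : Fin n → ℂ} {i : Fin m} :
    i ∈ Xp a μ p ↔ a i ⬝ᵥ p + μ i = 0 :=
  Iff.rfl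

theorem eq_of_span_eq_top_of_subset_Xp {a : Fin m → Fin n → ℂ} {μ : Fin m → ℂ} {s : Set (Fin m)}
    (hs : Submodule.span ℂ (a '' s) = ⊤) {p q : Fin n → ℂ} (hp : s ⊆ Xp a μ p)
    (hq : s ⊆ Xp a μ q) : p = q := by
  have hker : Submodule.span ℂ (a '' s) ≤ LinearMap.ker (dotProductEquiv ℂ (Fin n) (p - q)) := by
    rw [Submodule.span_le]
    rintro _ ⟨i, hi, rfl⟩
    have hpq : a i ⬝ᵥ p + μ i = a i ⬝ᵥ q + μ i := (hp hi).trans (hq hi).symm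
    simp [dotProduct_comm _ (a i), add_right_cancel hpq]
  rw [hs] at hker
  exact sub_eq_zero.mp (dotProduct_eq_zero_iff.mp fun w => hker Submodule.mem_top)

/-- `L(X_p)`. -/
def spanningSubsetsAt (a : Fin m → Fin n → ℂ) (μ : Fin m → ℂ) (p : Fin n → ℂ) :
    Set (Finset (Fin m)) :=
  {ℓ | (ℓ : Set (Fin m)) ⊆ Xp a μ p ∧ Submodule.span ℂ (a '' (ℓ : Set (Fin m))) = ⊤}

theorem pairwise_disjoint_spanningSubsetsAt (a : Fin m → Fin n → ℂ) (μ : Fin m → ℂ) :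
    Pairwise (Disjoint on (spanningSubsetsAt a μ)) := fun _ _ hpq =>
  Set.disjoint_left.mpr fun _ hp hq => hpq (eq_of_span_eq_top_of_subset_Xp hp.2 hp.1 hq.1)

theorem armPoints_finite (a : Fin m → Fin n → ℂ) (μ : Fin m → ℂ) : (armPoints a μ).Finite :=
  Set.Finite.of_finite_image (Set.toFinite _) fun _ hp _ _ hpq =>
    eq_of_span_eq_top_of_subset_Xp hp subset_rfl hpq.le

theorem prod_inv_affForm_mem_span {a : Fin m → Fin n → ℂ} (μ : Fin m → ℂ) (ha : ∀ i, a i ≠ 0)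
    (S : Finset (Fin m)) (hS : Submodule.span ℂ (a '' ↑S) = ⊤) :
    ∏ i ∈ S, (affForm a μ i)⁻¹ ∈ Submodule.span ℂ ((fun ℓ => ∏ i ∈ ℓ, (affForm a μ i)⁻¹) ''
      ⋃ p ∈ armPoints a μ, spanningSubsetsAt a μ p) := by
  induction S using Finset.strongInduction with
  | H S ih =>
  by_cases hpt : ∃ p, (S : Set (Fin m)) ⊆ Xp a μ p
  · obtain ⟨p, hp⟩ := hpt
    have hp_mem : p ∈ armPoints a μ := top_unique (hS ▸ Submodule.span_mono (Set.image_mono hp))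
    exact Submodule.subset_span ⟨S, Set.mem_biUnion hp_mem ⟨hp, hS⟩, rfl⟩
  · obtain ⟨c, hca, hcμ⟩ := exists_sum_smul_eq_zero_and_sum_mul_eq_one S a μ (by
      simpa [Set.subset_def, mem_Xp_iff] using hpt)
    rw [prod_inv_eq_sum_smul_prod_erase c (fun i _ => affForm_ne_zero μ (ha i))
      (sum_smul_affForm_eq_one hca hcμ)]
    refine Submodule.sum_mem _ fun i hi => ?_
    rcases eq_or_ne (c i) 0 with hci | hci
    · simp [hci]
    · exact Submodule.smul_mem _ _ (ih _ (Finset.erase_ssubset hi)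
        ((span_image_erase_eq_of_sum_smul_eq_zero hca hi hci).trans hS))

/-- Corrected Proposition 8.5: there exist complex numbers `c_ℓ`, indexed by pairs
`(p, ℓ)` with `p ∈ P(X, μ)` and `ℓ ∈ L(X_p)` (the spanning subsets of `X_p`), such that,
in `K = ℂ(x_1, …, x_n)`,
`∏ i, 1/(a i + μ i) = ∑_{p ∈ P(X,μ)} ∑_{ℓ ∈ L(X_p)} c_ℓ ∏_{i ∈ ℓ} 1/(a i + μ i)`. -/
theorem corrected_prop_8_5 {n m : ℕ} (a : Fin m → (Fin n → ℂ)) (μ : Fin m → ℂ)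
    (ha : ∀ i, a i ≠ 0)
    (hspan : Submodule.span ℂ (Set.range a) = ⊤) :
    ∃ c : (Fin n → ℂ) → Finset (Fin m) → ℂ,
      ∏ i, (affForm a μ i)⁻¹ =
        ∑ᶠ p ∈ armPoints a μ,
          ∑ᶠ ℓ ∈ {ℓ : Finset (Fin m) |
              (ℓ : Set (Fin m)) ⊆ Xp a μ p ∧ Submodule.span ℂ (a '' (ℓ : Set (Fin m))) = ⊤},
            algebraMap (MvPolynomial (Fin n) ℂ) (FractionRing (MvPolynomial (Fin n) ℂ))
                (C (c p ℓ)) *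
              ∏ i ∈ ℓ, (affForm a μ i)⁻¹ := by
  have hmem := prod_inv_affForm_mem_span μ ha Finset.univ (by simpa using hspan)
  rw [← (Set.toFinite (⋃ p ∈ armPoints a μ, spanningSubsetsAt a μ p)).coe_toFinset,
    Submodule.mem_span_image_finset_iff_exists_fun'] at hmem
  obtain ⟨c, hc⟩ := hmem
  rw [← finsum_mem_eq_finite_toFinset_sum] at hc
  refine ⟨fun _ ℓ => c ℓ, hc.symm.trans (.trans ?_ (finsum_mem_biUnion
    (f := fun ℓ => algebraMap _ _ (C (c ℓ)) * ∏ i ∈ ℓ, (affForm a μ i)⁻¹)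
    ((pairwise_disjoint_spanningSubsetsAt a μ).set_pairwise _) (armPoints_finite a μ)
    fun _ _ => Set.toFinite _))⟩
  refine finsum_mem_congr rfl fun ℓ _ => ?_
  rw [Algebra.smul_def, IsScalarTower.algebraMap_apply ℂ (MvPolynomial (Fin n) ℂ), algebraMap_eq]
end

section
/- Let X = (a_1, ..., a_m) be a finite list of nonzero vectors spanning ℂ^n, with m > n or more generally with at least one sublist of X that spans ℂ^n and is linearly dependent possible. Then the set of parameter vectors μ ∈ ℂ^m for which the data fail to be generic — i.e. for which there exists a point p ∈ ℂ^n such that X_p := { i : ⟨a_i | p⟩ + μ_i = 0 } spans ℂ^n but {a_i : i ∈ X_p} is linearly dependent — is contained in a finite union of proper affine subspaces (hyperplanes) of ℂ^m. In particular, for generic μ every point p of the arrangement has X_p a basis of ℂ^n extracted from X, and conversely every basis extracted from X gives rise to a point of the arrangement. -/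
/-!
If `c` is a linear relation `∑ cᵢ aᵢ = 0` supported on `X_p`, then `μᵢ = -⟨aᵢ | p⟩` on its
support, so `∑ cᵢ μᵢ = -⟨∑ cᵢ aᵢ | p⟩ = 0`. Fixing one nontrivial relation `c^S` for each of the
finitely many dependent index sets `S`, every nongeneric `μ` therefore lies on one of the
hyperplanes `∑ c^S_i μᵢ = 0`, which are proper because `c^S ≠ 0`.
-/

open Matrix

section Relations

variable {K ι M : Type*} [CommRing K] [AddCommGroup M] [Module K M] [Fintype ι]

def IsNontrivialRelationOn (v : ι → M) (S : Set ι) (c : ι → K) : Prop :=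
  c ≠ 0 ∧ Function.support c ⊆ S ∧ ∑ i, c i • v i = 0

theorem exists_isNontrivialRelationOn_of_not_linearIndepOn {v : ι → M} {S : Set ι}
    (h : ¬ LinearIndepOn K v S) : ∃ c : ι → K, IsNontrivialRelationOn v S c := by
  rw [linearIndepOn_iff] at h
  push Not at h
  obtain ⟨l, hlS, hl, hne⟩ := h
  refine ⟨l, by simpa using hne, by simpa [Finsupp.mem_supported] using hlS, ?_⟩
  rwa [Finsupp.linearCombination_apply, Finsupp.sum_fintype _ _ fun i => zero_smul K (v i)] at hl

end Relations

theorem dotProduct_eq_zero_of_sum_smul_eq_zero {K ι κ : Type*} [CommRing K] [Fintype ι]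
    [Fintype κ] {a : ι → κ → K} {c μ : ι → K} {p : κ → K} (hc : ∑ i, c i • a i = 0)
    (hsupp : Function.support c ⊆ {i | a i ⬝ᵥ p + μ i = 0}) :
    c ⬝ᵥ μ = 0 := by
  have hvanish : c ⬝ᵥ (Matrix.of a *ᵥ p + μ) = 0 :=
    Finset.sum_eq_zero fun i _ => by
      by_cases hi : c i = 0
      · simp [hi]
      · exact mul_eq_zero_of_right _ (hsupp hi)
  rw [dotProduct_add, dotProduct_mulVec, vecMul_eq_sum] at hvanish
  change (∑ i, c i • a i) ⬝ᵥ p + c ⬝ᵥ μ = 0 at hvanish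
  rwa [hc, zero_dotProduct, zero_add] at hvanish

section Hyperplane

variable {K ι : Type*} [CommRing K] [Fintype ι]

def dotProductHyperplane (c : ι → K) : AffineSubspace K (ι → K) :=
  (LinearMap.ker (dotProductBilin K K c)).toAffineSubspace

@[simp]
theorem mem_dotProductHyperplane {c μ : ι → K} :
    μ ∈ dotProductHyperplane c ↔ c ⬝ᵥ μ = 0 := by
  simp [dotProductHyperplane]

theorem dotProductHyperplane_ne_top {c : ι → K} (hc : c ≠ 0) : dotProductHyperplane c ≠ ⊤ := by
  classical
  obtain ⟨i, hi⟩ := Function.ne_iff.mp hc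
  intro htop
  have hsingle : c ⬝ᵥ Pi.single i 1 = 0 :=
    mem_dotProductHyperplane.mp (htop ▸ AffineSubspace.mem_top _ _ _)
  exact hi (by simpa using hsingle)

end Hyperplane

theorem nongeneric_parameters_thin_general (n m : ℕ) (a : Fin m → (Fin n → ℂ)) :
    ∃ s : Finset (AffineSubspace ℂ (Fin m → ℂ)),
      (∀ W ∈ s, W ≠ ⊤) ∧
      {μ : Fin m → ℂ | ∃ p : Fin n → ℂ,
          Submodule.span ℂ (a '' {i | (∑ j, a i j * p j) + μ i = 0}) = ⊤ ∧
          ¬ LinearIndependent ℂ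
              (fun i : {i | (∑ j, a i j * p j) + μ i = 0} => a i)} ⊆
        ⋃ W ∈ s, (W : Set (Fin m → ℂ)) := by
  classical
  let Dependent := {S : Set (Fin m) // ∃ c : Fin m → ℂ, IsNontrivialRelationOn a S c}
  choose c hc using fun S : Dependent => S.2
  refine ⟨Finset.univ.image fun S => dotProductHyperplane (c S), ?_, ?_⟩
  · simp only [Finset.mem_image, Finset.mem_univ, true_and, forall_exists_index]
    rintro _ S rfl
    exact dotProductHyperplane_ne_top (hc S).1
  · rintro μ ⟨p, -, hdep⟩
    let S : Dependent := ⟨_, exists_isNontrivialRelationOn_of_not_linearIndepOn hdep⟩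
    simp only [Set.mem_iUnion, Finset.mem_image, Finset.mem_univ, true_and, exists_prop]
    exact ⟨_, ⟨S, rfl⟩, mem_dotProductHyperplane.mpr
      (dotProduct_eq_zero_of_sum_smul_eq_zero (hc S).2.2 (hc S).2.1)⟩

/-- The set of parameter vectors `μ ∈ ℂ^m` for which the data `(X, μ)` fail to be
generic — i.e. for which there is a point `p` such that the sublist
`X_p = {i | ⟨a i | p⟩ + μ i = 0}` spans `ℂ^n` but `{a i : i ∈ X_p}` is linearly
dependent — is contained in a finite union of proper affine subspaces of `ℂ^m`.
In particular, for `μ` outside this finite union, every point of the arrangement has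
`X_p` a basis of `ℂ^n` extracted from `X`. -/
theorem nongeneric_parameters_thin (n m : ℕ) (a : Fin m → (Fin n → ℂ))
    (ha : ∀ i, a i ≠ 0)
    (hspan : Submodule.span ℂ (Set.range a) = ⊤) :
    ∃ s : Finset (AffineSubspace ℂ (Fin m → ℂ)),
      (∀ W ∈ s, W ≠ ⊤) ∧
      {μ : Fin m → ℂ | ∃ p : Fin n → ℂ,
          Submodule.span ℂ (a '' {i | (∑ j, a i j * p j) + μ i = 0}) = ⊤ ∧
          ¬ LinearIndependent ℂ
              (fun i : {i | (∑ j, a i j * p j) + μ i = 0} => a i)} ⊆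
        ⋃ W ∈ s, (W : Set (Fin m → ℂ)) :=
  nongeneric_parameters_thin_general n m a
end
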